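/- arXiv:1505.06263 — 5 statements merged into one kernel-verified Lean document; each statement's English description precedes it below -/
import Mathlib

section
/- Let C be a linear code of length n over R, let i ∈ {1,…,5}, and let x ∈ Rⁿ be such that uⁱ·x ∈ C and the coordinatewise reduction x̄ of x modulo the maximal ideal (u) (a vector in F₂ⁿ) is nonzero. Then there exist two distinct codewords c₁, c₂ ∈ C with d_c(c₁, c₂) ≤ w_H(x̄), the Hamming weight of x̄. (In other words, the minimum edit distance of C is at most the minimum Hamming distance of each torsion code Tor_i(C), the image of (C : uⁱ) = {x ∈ Rⁿ : uⁱx ∈ C} under reduction mod u.) -/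
open Polynomial

/-- The ring `R = F₂[u]/(u⁶)`. -/
abbrev R : Type := AdjoinRoot (X ^ 6 : (ZMod 2)[X])

noncomputable instance : DecidableEq R := Classical.decEq _

/-- `u ∈ R`, the image of `X`. -/
noncomputable def u : R := AdjoinRoot.root _

/-- Cost structure for the Levenshtein distance (formerly in Mathlib). -/
structure Levenshtein.Cost (α β δ : Type*) where
  delete : α → δ
  insert : β → δ
  substitute : α → β → δ

/-- The default cost: every deletion, insertion and substitution costs 1. -/
def Levenshtein.defaultCost {α : Type*} [DecidableEq α] : Levenshtein.Cost α α ℕ where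
  delete _ := 1
  insert _ := 1
  substitute a b := if a = b then 0 else 1

/-- Auxiliary step of the Levenshtein dynamic program (formerly in Mathlib). -/
def Levenshtein.impl {α β δ : Type*} [AddZeroClass δ] [Min δ]
    (C : Levenshtein.Cost α β δ) (xs : List α) (y : β)
    (d : {r : List δ // 0 < r.length}) : {r : List δ // 0 < r.length} :=
  let ⟨ds, w⟩ := d
  xs.zip (ds.zip ds.tail) |>.foldr
    (init := ⟨[C.insert y + ds.getLast (List.length_pos_iff.mp w)], by simp⟩)
    (fun ⟨x, d₀, d₁⟩ ⟨r, w⟩ =>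
      ⟨min (C.delete x + r[0]) (min (C.insert y + d₀) (C.substitute x y + d₁)) :: r, by simp⟩)

/-- Levenshtein distances of all suffixes of `xs` to `ys` (formerly in Mathlib). -/
def suffixLevenshtein {α β δ : Type*} [AddZeroClass δ] [Min δ]
    (C : Levenshtein.Cost α β δ) (xs : List α) (ys : List β) :
    {r : List δ // 0 < r.length} :=
  ys.foldr
    (Levenshtein.impl C xs)
    (xs.foldr (init := ⟨[0], by simp⟩) (fun a ⟨r, w⟩ => ⟨(C.delete a + r[0]) :: r, by simp⟩))

/-- The Levenshtein (edit) distance with cost `C` (formerly in Mathlib). -/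
def levenshtein {α β δ : Type*} [AddZeroClass δ] [Min δ]
    (C : Levenshtein.Cost α β δ) (xs : List α) (ys : List β) : δ :=
  let ⟨r, w⟩ := suffixLevenshtein C xs ys
  r[0]

/-!
The codeword `u⁵ • x = u^(5-i) • (uⁱ • x)` lies in `C`. Since `u⁶ = 0`, `u⁵ a = 0` exactly when
`u ∣ a`, so `u⁵ • x` is nonzero precisely on the support of `x̄`. Comparing it with the codeword
`0` using substitutions only bounds their edit distance by their Hamming distance, which is the
weight of `x̄`.
-/

open Levenshtein

section

variable {α β δ : Type*} [AddZeroClass δ] [Min δ] (C : Cost α β δ)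

theorem Levenshtein.impl_cons (x : α) (xs : List α) (y : β) (d : δ) (ds : List δ) (w)
    (w' : 0 < ds.length) :
    impl C (x :: xs) y ⟨d :: ds, w⟩ =
      ⟨min (C.delete x + (impl C xs y ⟨ds, w'⟩).1[0]'(impl C xs y ⟨ds, w'⟩).2)
          (min (C.insert y + d) (C.substitute x y + ds[0])) :: (impl C xs y ⟨ds, w'⟩).1,
        by simp⟩ :=
  match ds, w' with | _ :: _, _ => rfl

theorem suffixLevenshtein_cons_left (x : α) (xs : List α) (ys : List β) :
    suffixLevenshtein C (x :: xs) ys =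
      ⟨levenshtein C (x :: xs) ys :: (suffixLevenshtein C xs ys).1, by simp⟩ := by
  induction ys with
  | nil => rfl
  | cons y ys ih =>
    apply Subtype.ext
    have htail : (suffixLevenshtein C (x :: xs) (y :: ys)).1.tail =
        (suffixLevenshtein C xs (y :: ys)).1 := by
      change (impl C (x :: xs) y (suffixLevenshtein C (x :: xs) ys)).1.tail = _
      rw [ih, impl_cons (w' := (suffixLevenshtein C xs ys).2)]
      rfl
    calc (suffixLevenshtein C (x :: xs) (y :: ys)).1
        = (suffixLevenshtein C (x :: xs) (y :: ys)).1[0]'(suffixLevenshtein C _ _).2 ::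
            (suffixLevenshtein C (x :: xs) (y :: ys)).1.tail := by
          rw [List.getElem_zero, List.cons_head_tail]
      _ = _ := by rw [htail]; rfl

theorem levenshtein_cons_cons (x : α) (xs : List α) (y : β) (ys : List β) :
    levenshtein C (x :: xs) (y :: ys) =
      min (C.delete x + levenshtein C xs (y :: ys))
        (min (C.insert y + levenshtein C (x :: xs) ys)
          (C.substitute x y + levenshtein C xs ys)) := by
  change (impl C (x :: xs) y (suffixLevenshtein C (x :: xs) ys)).1[0]'(impl C _ y _).2 = _
  rw [suffixLevenshtein_cons_left C x xs ys,
    impl_cons (w' := (suffixLevenshtein C xs ys).2)]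
  rfl

end

theorem levenshtein_ofFn_le_hammingDist {α : Type*} [DecidableEq α] {n : ℕ}
    (f g : Fin n → α) :
    levenshtein defaultCost (List.ofFn f) (List.ofFn g) ≤ hammingDist f g := by
  induction n with
  | zero => exact Nat.zero_le _
  | succ n ih =>
    have hsplit : hammingDist f g =
        defaultCost.substitute (f 0) (g 0) +
          hammingDist (fun i : Fin n => f i.succ) (fun i => g i.succ) := by
      simp only [hammingDist, Finset.card_filter, Fin.sum_univ_succ, defaultCost, ite_not]
    rw [List.ofFn_succ, List.ofFn_succ, levenshtein_cons_cons, hsplit]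
    exact (min_le_right _ _).trans ((min_le_right _ _).trans (Nat.add_le_add_left (ih _ _) _))

namespace AdjoinRoot

variable {K : Type*} [CommRing K]

theorem root_X_pow_pow_self (k : ℕ) : root (X ^ k : K[X]) ^ k = 0 := by
  rw [← mk_X, ← map_pow, mk_self]

theorem root_X_pow_succ_pow_mul_eq_zero_iff [IsDomain K] {k : ℕ}
    (a : AdjoinRoot (X ^ (k + 1) : K[X])) :
    root (X ^ (k + 1) : K[X]) ^ k * a = 0 ↔ a ∈ Ideal.span {root (X ^ (k + 1) : K[X])} := by
  obtain ⟨p, rfl⟩ := mk_surjective a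
  constructor
  · intro h
    rw [← mk_X, ← map_pow, ← map_mul, mk_eq_zero, pow_succ] at h
    rw [← mk_X, Ideal.mem_span_singleton]
    exact map_dvd _ ((mul_dvd_mul_iff_left (pow_ne_zero k X_ne_zero)).1 h)
  · intro h
    obtain ⟨b, hb⟩ := Ideal.mem_span_singleton.1 h
    rw [hb, ← mul_assoc, ← pow_succ, root_X_pow_pow_self, zero_mul]

end AdjoinRoot

theorem u_pow_five_mul_eq_zero_iff (a : R) : u ^ 5 * a = 0 ↔ a ∈ Ideal.span ({u} : Set R) :=
  AdjoinRoot.root_X_pow_succ_pow_mul_eq_zero_iff (k := 5) a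

theorem hammingNorm_u_pow_five_smul {ι : Type*} [Fintype ι] (x : ι → R) :
    hammingNorm (u ^ 5 • x) = Nat.card {j // x j ∉ Ideal.span ({u} : Set R)} := by
  classical
  rw [Nat.card_eq_fintype_card, Fintype.card_subtype, hammingNorm]
  congr 1
  ext j
  simp only [Finset.mem_filter, Pi.smul_apply, smul_eq_mul, ne_eq]
  rw [u_pow_five_mul_eq_zero_iff]

theorem edit_distance_le_torsion_weight_general (n : ℕ)
    (C : Submodule R (Fin n → R)) (i : ℕ) (hi5 : i ≤ 5)
    (x : Fin n → R) (hx : u ^ i • x ∈ C)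
    (hxbar : ∃ j : Fin n, x j ∉ Ideal.span ({u} : Set R)) :
    ∃ c₁ ∈ C, ∃ c₂ ∈ C, c₁ ≠ c₂ ∧
      levenshtein Levenshtein.defaultCost (List.ofFn c₁) (List.ofFn c₂)
        ≤ Nat.card {j : Fin n // x j ∉ Ideal.span ({u} : Set R)} := by
  obtain ⟨j₀, hj₀⟩ := hxbar
  have hmem : u ^ 5 • x ∈ C := by
    rw [← Nat.sub_add_cancel hi5, pow_add, mul_smul]
    exact C.smul_mem _ hx
  refine ⟨u ^ 5 • x, hmem, 0, C.zero_mem,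
    fun h => hj₀ ((u_pow_five_mul_eq_zero_iff _).1 (congrFun h j₀)), ?_⟩
  calc _ ≤ hammingDist (u ^ 5 • x) 0 := levenshtein_ofFn_le_hammingDist _ _
    _ = _ := by rw [hammingDist_zero_right, hammingNorm_u_pow_five_smul]

/-- if `C` is a linear code of length `n` over `R`, `1 ≤ i ≤ 5`, and `x ∈ Rⁿ`
satisfies `uⁱ • x ∈ C` with the reduction of `x` modulo the maximal ideal `(u)` nonzero,
then there are two distinct codewords at edit distance at most the Hamming weight of that
reduction. -/
theorem edit_distance_le_torsion_weight (n : ℕ) (hn : 0 < n)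
    (C : Submodule R (Fin n → R)) (i : ℕ) (hi1 : 1 ≤ i) (hi5 : i ≤ 5)
    (x : Fin n → R) (hx : u ^ i • x ∈ C)
    (hxbar : ∃ j : Fin n, x j ∉ Ideal.span ({u} : Set R)) :
    ∃ c₁ ∈ C, ∃ c₂ ∈ C, c₁ ≠ c₂ ∧
      levenshtein Levenshtein.defaultCost (List.ofFn c₁) (List.ofFn c₂)
        ≤ Nat.card {j : Fin n // x j ∉ Ideal.span ({u} : Set R)} :=
  edit_distance_le_torsion_weight_general n C i hi5 x hx hxbar
end

section
/- Let n be odd, let f₀, f₁, f₂, f₃, f₄, f₅ be monic polynomials in F₂[x] with f₅|f₄|f₃|f₂|f₁|f₀|(xⁿ−1), and let C be the cyclic code of length n over R given by the ideal of R[x]/(xⁿ−1) generated by f₀, uf₁, u²f₂, u³f₃, u⁴f₄, u⁵f₅ (coefficients embedded via F₂ ↪ R). If C is reverse-complement, then every f_i (0 ≤ i ≤ 5) is self-reciprocal. -/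
open Polynomial

/-- `α = u⁵ + u⁴ + u³ + u² + u + 1`, so that the complement of `x ∈ R` is `x + α`. -/
noncomputable def alpha : R := u ^ 5 + u ^ 4 + u ^ 3 + u ^ 2 + u + 1

/-- Reverse-complement of a vector: `(c₀, …, c_{n-1}) ↦ (ĉ_{n-1}, …, ĉ₀)` with `x̂ = x + α`. -/
noncomputable def rcomp {n : ℕ} (c : Fin n → R) : Fin n → R := fun j => c j.rev + alpha

/-- Lift a binary polynomial to a polynomial over `R` via `F₂ ↪ R`. -/
noncomputable def rmap (f : (ZMod 2)[X]) : R[X] := f.map (algebraMap (ZMod 2) R)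

/-- The quotient map `R[x] → R[x]/(xⁿ - 1)`. -/
noncomputable def mkq (n : ℕ) : R[X] →+* R[X] ⧸ Ideal.span ({(X : R[X]) ^ n - 1} : Set R[X]) :=
  Ideal.Quotient.mk _

/-- The cyclic code of length `n` over `R` given (as a set of coefficient vectors) by the
ideal of `R[x]/(xⁿ - 1)` generated by `f₀, u f₁, u² f₂, u³ f₃, u⁴ f₄, u⁵ f₅`. -/
noncomputable def cyclicCode (n : ℕ) (f₀ f₁ f₂ f₃ f₄ f₅ : (ZMod 2)[X]) :
    Set (Fin n → R) :=
  {c | mkq n (∑ i : Fin n, Polynomial.C (c i) * X ^ (i : ℕ)) ∈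
    Ideal.span ({mkq n (rmap f₀), mkq n (Polynomial.C u * rmap f₁),
      mkq n (Polynomial.C (u ^ 2) * rmap f₂), mkq n (Polynomial.C (u ^ 3) * rmap f₃),
      mkq n (Polynomial.C (u ^ 4) * rmap f₄), mkq n (Polynomial.C (u ^ 5) * rmap f₅)} :
        Set (R[X] ⧸ Ideal.span ({(X : R[X]) ^ n - 1} : Set R[X])))}

/-!
Since the zero word lies in `C`, so does the all-`α` word, and subtracting it shows that `C` is
closed under plain reversal. In `R[x]/(xⁿ - 1)` reversal of a word is `c(x) ↦ x^(n-1) c(x⁻¹)`, so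
the ideal of `C` is stable under the automorphism `x ↦ x⁻¹` and therefore contains `uⁱ fᵢ*`.
Multiplying by `u^(5-i)` and reading off the `u⁵`-coefficient is `F₂[x]`-linear and kills
`uʲ fⱼ` for `j > i`; applied to a representation of `uⁱ fᵢ*` in terms of the generators it gives
`fᵢ ∣ fᵢ*`. As `fᵢ` is monic with `fᵢ(0) = 1` (it divides `xⁿ - 1`), this forces `fᵢ* = fᵢ`.
-/

open AdjoinRoot

namespace Polynomial

variable {S : Type*} [Semiring S] {n : ℕ}

theorem sum_fin_C_coeff_mul_X_pow {p : S[X]} (hp : p.natDegree < n) :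
    ∑ i : Fin n, C (p.coeff i) * X ^ (i : ℕ) = p := by
  conv_rhs => rw [as_sum_range' p n hp]
  simp only [C_mul_X_pow_eq_monomial]
  exact Fin.sum_univ_eq_sum_range (fun i => monomial i (p.coeff i)) n

theorem sum_fin_C_rev_mul_X_pow (c : Fin n → S) :
    ∑ i : Fin n, C (c i.rev) * X ^ (i : ℕ) =
      reflect (n - 1) (∑ i : Fin n, C (c i) * X ^ (i : ℕ)) := by
  let reflectHom : S[X] →+ S[X] :=
    ⟨⟨reflect (n - 1), reflect_zero⟩, fun f g => reflect_add f g _⟩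
  change _ = reflectHom (∑ i : Fin n, C (c i) * X ^ (i : ℕ))
  rw [map_sum, ← Equiv.sum_comp Fin.revPerm]
  refine Finset.sum_congr rfl fun i _ => ?_
  simp only [Fin.revPerm_apply, Fin.rev_rev, reflectHom, AddMonoidHom.coe_mk, ZeroHom.coe_mk,
    reflect_C_mul_X_pow, revAt_le (Nat.le_sub_one_of_lt i.isLt), Fin.val_rev]
  congr 2
  omega

theorem reverse_eq_self_of_dvd_reverse {K : Type*} [CommRing K] {f : K[X]} (hm : f.Monic)
    (h0 : f.coeff 0 = 1) (hd : f ∣ f.reverse) : f.reverse = f := by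
  nontriviality K
  have hmrev : f.reverse.Monic := by
    rw [Monic, reverse_leadingCoeff, trailingCoeff,
      natTrailingDegree_eq_zero.2 (.inr (by simp [h0])), h0]
  exact eq_of_monic_of_dvd_of_natDegree_le hm hmrev hd (reverse_natDegree_le f)

end Polynomial

namespace CyclicCode

variable {A : Type*} [CommRing A] {n : ℕ}

theorem root_pow_self : root (X ^ n - 1 : A[X]) ^ n = 1 := by
  rw [← sub_eq_zero, ← mk_X, ← map_pow, ← map_one (mk _), ← map_sub, mk_self]

theorem root_pow_pred_mul_root (hn : n ≠ 0) :
    root (X ^ n - 1 : A[X]) ^ (n - 1) * root _ = 1 := by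
  rw [← pow_succ, Nat.sub_add_cancel (Nat.pos_of_ne_zero hn), root_pow_self]

/-- The automorphism `x ↦ x⁻¹ = x^(n-1)` of `A[x]/(xⁿ - 1)` (when `n ≠ 0`). -/
noncomputable def cyclicInv : AdjoinRoot (X ^ n - 1 : A[X]) →+* AdjoinRoot (X ^ n - 1 : A[X]) :=
  lift (of _) (root _ ^ (n - 1)) (by
    rw [eval₂_sub, eval₂_X_pow, eval₂_one, ← pow_mul, mul_comm, pow_mul, root_pow_self, one_pow,
      sub_self])

theorem mk_reflect (hn : n ≠ 0) {p : A[X]} {N : ℕ} (hp : p.natDegree ≤ N) :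
    mk (X ^ n - 1) (reflect N p) = cyclicInv (mk _ p) * root _ ^ N := by
  let _ : Invertible (root (X ^ n - 1 : A[X])) :=
    ⟨_, root_pow_pred_mul_root hn, (mul_comm _ _).trans (root_pow_pred_mul_root hn)⟩
  have h := eval₂_reflect_mul_pow (of (X ^ n - 1 : A[X])) (root _) N (reflect N p)
    (natDegree_reflect_le.trans (max_le le_rfl hp))
  rw [reflect_reflect] at h
  rw [cyclicInv, lift_mk, ← aeval_eq, aeval_def]
  exact h.symm

def codeOfIdeal (I : Ideal (AdjoinRoot (X ^ n - 1 : A[X]))) : Set (Fin n → A) :=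
  {c | mk _ (∑ i : Fin n, C (c i) * X ^ (i : ℕ)) ∈ I}

theorem rev_mem_codeOfIdeal {I : Ideal (AdjoinRoot (X ^ n - 1 : A[X]))} (a : A)
    (h : ∀ c ∈ codeOfIdeal I, (fun j => c j.rev + a) ∈ codeOfIdeal I) {c : Fin n → A}
    (hc : c ∈ codeOfIdeal I) : (fun j => c j.rev) ∈ codeOfIdeal I := by
  have h0 := h 0 (by simp [codeOfIdeal])
  simpa [codeOfIdeal, add_mul, Finset.sum_add_distrib] using I.sub_mem (h c hc) h0

theorem cyclicInv_mem (hn : n ≠ 0) {I : Ideal (AdjoinRoot (X ^ n - 1 : A[X]))}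
    (h : ∀ c ∈ codeOfIdeal I, (fun j => c j.rev) ∈ codeOfIdeal I)
    {x : AdjoinRoot (X ^ n - 1 : A[X])} (hx : x ∈ I) : cyclicInv x ∈ I := by
  have hmon : (X ^ n - 1 : A[X]).Monic := by simpa using monic_X_pow_sub_C (1 : A) hn
  obtain ⟨p, rfl⟩ := mk_surjective x
  set r := p %ₘ (X ^ n - 1)
  have hrp : mk (X ^ n - 1) r = mk _ p := by
    simpa only [modByMonicHom_mk] using mk_leftInverse hmon (mk _ p)
  have hr : r.natDegree < n := by
    rcases subsingleton_or_nontrivial A with hA | hA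
    · rw [natDegree_of_subsingleton]; exact Nat.pos_of_ne_zero hn
    have hdeg : (X ^ n - 1 : A[X]).natDegree = n := by rw [← C_1, natDegree_X_pow_sub_C]
    exact hdeg ▸ natDegree_modByMonic_lt p hmon fun h1 => hn (by simpa [h1] using hdeg.symm)
  have hrev := h (fun i => r.coeff i)
    (by rwa [codeOfIdeal, Set.mem_ofPred, sum_fin_C_coeff_mul_X_pow hr, hrp])
  rw [codeOfIdeal, Set.mem_ofPred, sum_fin_C_rev_mul_X_pow (fun i => r.coeff i),
    sum_fin_C_coeff_mul_X_pow hr, mk_reflect hn (Nat.le_sub_one_of_lt hr), hrp] at hrev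
  simpa [mul_assoc, root_pow_pred_mul_root hn] using I.mul_mem_right (root _) hrev

theorem mem_span_insert_of_mk_mem_span_image {g p : A[X]} {S : Set A[X]}
    (hp : mk g p ∈ Ideal.span (mk g '' S)) : p ∈ Ideal.span (insert g S) := by
  rw [← Ideal.map_span, ← Ideal.mem_comap, Ideal.comap_map_of_surjective' _ mk_surjective,
    show RingHom.ker (mk g) = Ideal.span {g} from Ideal.mk_ker] at hp
  rwa [Set.insert_eq, Ideal.span_union, sup_comm]

end CyclicCode

open CyclicCode

theorem u_pow_eq_zero {m : ℕ} (hm : 6 ≤ m) : u ^ m = 0 := by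
  rw [← Nat.add_sub_cancel' hm, pow_add, u, ← mk_X, ← map_pow, mk_self, zero_mul]

noncomputable def uCoeff (k : ℕ) : R →ₗ[ZMod 2] ZMod 2 :=
  (lcoeff (ZMod 2) k).comp (modByMonicHom (monic_X_pow 6))

theorem uCoeff_u_pow_self {k : ℕ} (hk : k < 6) : uCoeff k (u ^ k) = 1 := by
  have hlt : (X ^ k : (ZMod 2)[X]).degree < (X ^ 6 : (ZMod 2)[X]).degree := by
    simpa using hk
  rw [uCoeff, LinearMap.comp_apply, u, ← mk_X, ← map_pow, modByMonicHom_mk,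
    (modByMonic_eq_self_iff (monic_X_pow 6)).2 hlt, lcoeff_apply, coeff_X_pow_self]

noncomputable def uCoeffPoly (k : ℕ) : R[X] →+ (ZMod 2)[X] where
  toFun q := ⟨AddMonoidAlgebra.map (uCoeff k).toAddMonoidHom q.toFinsupp⟩
  map_zero' := by rw [toFinsupp_zero, AddMonoidAlgebra.map_zero, ofFinsupp_zero]
  map_add' p q := by rw [toFinsupp_add, AddMonoidAlgebra.map_add, ofFinsupp_add]

theorem coeff_uCoeffPoly (k : ℕ) (q : R[X]) (m : ℕ) :
    (uCoeffPoly k q).coeff m = uCoeff k (q.coeff m) := rfl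

theorem uCoeffPoly_C (k : ℕ) (a : R) : uCoeffPoly k (C a) = C (uCoeff k a) := by
  ext m; rw [coeff_uCoeffPoly, coeff_C, coeff_C]; split_ifs <;> simp

theorem uCoeffPoly_mul_rmap (k : ℕ) (q : R[X]) (g : (ZMod 2)[X]) :
    uCoeffPoly k (q * rmap g) = uCoeffPoly k q * g := by
  ext m
  simp only [coeff_uCoeffPoly, coeff_mul, map_sum, rmap, coeff_map]
  refine Finset.sum_congr rfl fun x _ => ?_
  rw [← Algebra.commutes, ← Algebra.smul_def, map_smul, smul_eq_mul, mul_comm]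

theorem dvd_of_C_u_pow_mul_rmap_mem_span {g h : (ZMod 2)[X]} {i : ℕ} (hi : i ≤ 5)
    {S : Set R[X]}
    (hS : ∀ s ∈ S, ∃ j f, s = C (u ^ j) * rmap f ∧ (j ≤ i → g ∣ f))
    (hmem : C (u ^ i) * rmap h ∈ Ideal.span S) : g ∣ h := by
  let P : Ideal R[X] :=
    { carrier := {q | ∀ r, g ∣ uCoeffPoly 5 (C (u ^ (5 - i)) * r * q)}
      zero_mem' := fun r => by simp
      add_mem' := fun ha hb r => by rw [mul_add, map_add]; exact dvd_add (ha r) (hb r)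
      smul_mem' := fun c q hq r => by
        simpa only [smul_eq_mul, mul_assoc] using hq (r * c) }
  have hSP : S ⊆ P := by
    intro s hs r
    obtain ⟨j, f, rfl, hf⟩ := hS s hs
    rw [← mul_assoc, uCoeffPoly_mul_rmap]
    by_cases hj : j ≤ i
    · exact (hf hj).mul_left _
    · rw [mul_right_comm, ← C_mul, ← pow_add, u_pow_eq_zero (by omega), C_0, zero_mul, map_zero,
        zero_mul]
      exact dvd_zero g
  have := Ideal.span_le.2 hSP hmem 1
  rwa [mul_one, ← mul_assoc, ← C_mul, ← pow_add, Nat.sub_add_cancel hi, uCoeffPoly_mul_rmap,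
    uCoeffPoly_C, uCoeff_u_pow_self (by norm_num), C_1, one_mul] at this

theorem coeff_zero_eq_one_of_dvd_X_pow_sub_one {n : ℕ} (hn : n ≠ 0) {f : (ZMod 2)[X]}
    (h : f ∣ X ^ n - 1) : f.coeff 0 = 1 := by
  obtain ⟨g, hg⟩ := h
  have h0 := congrArg (coeff · 0) hg
  simp only [mul_coeff_zero, coeff_sub, coeff_X_pow, coeff_one_zero, if_neg hn.symm] at h0
  have key : ∀ a b : ZMod 2, 0 - 1 = a * b → a = 1 := by decide
  exact key _ _ h0

noncomputable def codeIdeal (n : ℕ) (f : Fin 6 → (ZMod 2)[X]) :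
    Ideal (AdjoinRoot (X ^ n - 1 : R[X])) :=
  Ideal.span (Set.range fun j : Fin 6 => mk _ (C (u ^ (j : ℕ)) * rmap (f j)))

theorem reverse_eq_self_of_forall_rev_mem {n : ℕ} (hn : n ≠ 0) {f : Fin 6 → (ZMod 2)[X]}
    (hm : ∀ i, (f i).Monic) (hchain : ∀ i : Fin 5, f i.succ ∣ f i.castSucc)
    (h0 : f 0 ∣ X ^ n - 1)
    (hrev : ∀ c ∈ codeOfIdeal (codeIdeal n f), (fun k => c k.rev) ∈ codeOfIdeal (codeIdeal n f))
    (i : Fin 6) : (f i).reverse = f i := by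
  have hdvd {i j : Fin 6} (hji : j ≤ i) : f i ∣ f j :=
    Associates.mk_le_mk_iff_dvd.1 <|
      (Fin.antitone_iff_succ_le (f := fun k => Associates.mk (f k))).2
        (fun k => Associates.mk_le_mk_iff_dvd.2 (hchain k)) hji
  have hdeg : (C (u ^ (i : ℕ)) * rmap (f i)).natDegree ≤ (f i).natDegree :=
    (natDegree_C_mul_le _ _).trans natDegree_map_le
  have hrev_gen : mk _ (C (u ^ (i : ℕ)) * rmap (f i).reverse) ∈ codeIdeal n f := by
    have := (codeIdeal n f).mul_mem_right (root _ ^ (f i).natDegree)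
      (cyclicInv_mem hn hrev (Ideal.subset_span ⟨i, rfl⟩))
    rwa [← mk_reflect hn hdeg, reflect_C_mul, rmap, reflect_map] at this
  rw [codeIdeal, Set.range_comp'] at hrev_gen
  refine reverse_eq_self_of_dvd_reverse (hm i)
    (coeff_zero_eq_one_of_dvd_X_pow_sub_one hn ((hdvd (Fin.zero_le i)).trans h0)) ?_
  refine dvd_of_C_u_pow_mul_rmap_mem_span (Nat.le_of_lt_succ i.isLt) ?_
    (mem_span_insert_of_mk_mem_span_image hrev_gen)
  rintro s (rfl | ⟨j, rfl⟩)
  · exact ⟨0, X ^ n - 1, by simp [rmap], fun _ => (hdvd (Fin.zero_le i)).trans h0⟩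
  · exact ⟨j, f j, rfl, fun hj => hdvd hj⟩

theorem cyclicCode_eq_codeOfIdeal (n : ℕ) (f₀ f₁ f₂ f₃ f₄ f₅ : (ZMod 2)[X]) :
    cyclicCode n f₀ f₁ f₂ f₃ f₄ f₅ = codeOfIdeal (codeIdeal n ![f₀, f₁, f₂, f₃, f₄, f₅]) := by
  have hgens : (Set.range fun j : Fin 6 =>
        mk (X ^ n - 1) (C (u ^ (j : ℕ)) * rmap (![f₀, f₁, f₂, f₃, f₄, f₅] j))) =
      {mk _ (rmap f₀), mk _ (C u * rmap f₁), mk _ (C (u ^ 2) * rmap f₂),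
        mk _ (C (u ^ 3) * rmap f₃), mk _ (C (u ^ 4) * rmap f₄), mk _ (C (u ^ 5) * rmap f₅)} := by
    ext x
    simp [Fin.exists_fin_succ, @eq_comm _ x]
  rw [codeIdeal, hgens]
  rfl

/-- for `n` odd and monic `f₅|f₄|f₃|f₂|f₁|f₀|(xⁿ-1)` in `F₂[x]`, if the cyclic
code `⟨f₀, uf₁, u²f₂, u³f₃, u⁴f₄, u⁵f₅⟩` is reverse-complement, then every `fᵢ` is
self-reciprocal. -/
theorem selfReciprocal_of_reverseComplement (n : ℕ) (hodd : Odd n)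
    (f₀ f₁ f₂ f₃ f₄ f₅ : (ZMod 2)[X])
    (hm₀ : f₀.Monic) (hm₁ : f₁.Monic) (hm₂ : f₂.Monic) (hm₃ : f₃.Monic)
    (hm₄ : f₄.Monic) (hm₅ : f₅.Monic)
    (h54 : f₅ ∣ f₄) (h43 : f₄ ∣ f₃) (h32 : f₃ ∣ f₂) (h21 : f₂ ∣ f₁) (h10 : f₁ ∣ f₀)
    (h0 : f₀ ∣ X ^ n - 1)
    (hrc : ∀ c ∈ cyclicCode n f₀ f₁ f₂ f₃ f₄ f₅, rcomp c ∈ cyclicCode n f₀ f₁ f₂ f₃ f₄ f₅) :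
    f₀.reverse = f₀ ∧ f₁.reverse = f₁ ∧ f₂.reverse = f₂ ∧ f₃.reverse = f₃ ∧
      f₄.reverse = f₄ ∧ f₅.reverse = f₅ := by
  rw [cyclicCode_eq_codeOfIdeal] at hrc
  have key := reverse_eq_self_of_forall_rev_mem (f := ![f₀, f₁, f₂, f₃, f₄, f₅]) hodd.pos.ne'
    (fun i => by fin_cases i <;> assumption)
    (fun i => by fin_cases i; exacts [h10, h21, h32, h43, h54]) h0
    (fun c hc => rev_mem_codeOfIdeal alpha hrc hc)
  exact ⟨key 0, key 1, key 2, key 3, key 4, key 5⟩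
end

section
/- Let n be odd, let f₀, f₁, f₂, f₃, f₄, f₅ be monic polynomials in F₂[x] with f₅|f₄|f₃|f₂|f₁|f₀|(xⁿ−1), and let C be the cyclic code of length n over R given by the ideal of R[x]/(xⁿ−1) generated by f₀, uf₁, u²f₂, u³f₃, u⁴f₄, u⁵f₅ (coefficients embedded via F₂ ↪ R). If the codeword α(1+x+⋯+x^{n−1}) belongs to C and every f_i is self-reciprocal, then C is a reverse-complement code. -/
open Polynomial

/-! In `R[x]/(xⁿ - 1)` the residue of `x` is a unit and the reversed word of `c(x)` is
`x^{n-1} c(x⁻¹)`. The substitution `x ↦ x⁻¹` is an `R`-algebra endomorphism which sends a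
self-reciprocal `f` to `x^{-deg f} f`, an associate of `f`, so it maps each generator of the code
into the ideal it generates and hence preserves the code; so does reversal. Complementing then adds
`α(1 + x + ⋯ + x^{n-1})`, which lies in the code by assumption. -/

abbrev CyclicQuotient (A : Type*) [CommRing A] (n : ℕ) : Type _ :=
  A[X] ⧸ Ideal.span {(X : A[X]) ^ n - 1}

namespace CyclicQuotient

variable {A : Type*} [CommRing A] {n : ℕ}

local notation "mk" => Ideal.Quotient.mk (Ideal.span {(X : A[X]) ^ n - 1})

theorem mk_X_pow_self : (mk X : CyclicQuotient A n) ^ n = 1 := by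
  rw [← map_pow, ← map_one mk]
  exact Ideal.Quotient.eq.2 (Ideal.subset_span rfl)

theorem mk_X_mul_pow_pred (hn : n ≠ 0) : (mk X : CyclicQuotient A n) * mk X ^ (n - 1) = 1 := by
  rw [← pow_succ', Nat.sub_add_cancel (Nat.one_le_iff_ne_zero.2 hn), mk_X_pow_self]

variable (A n) in
/-- The substitution `x ↦ x⁻¹`, written as `x ↦ x ^ (n - 1)` so that it is defined for every `n`. -/
noncomputable def invX : CyclicQuotient A n →ₐ[A] CyclicQuotient A n :=
  Ideal.Quotient.liftₐ _ (aeval (mk X ^ (n - 1))) fun p hp => by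
    obtain ⟨q, rfl⟩ := Ideal.mem_span_singleton'.1 hp
    rw [map_mul, map_sub, map_pow, aeval_X, map_one, pow_right_comm, mk_X_pow_self, one_pow,
      sub_self, mul_zero]

theorem invX_mk (p : A[X]) : invX A n (mk p) = aeval (mk X ^ (n - 1)) p :=
  Ideal.Quotient.lift_mk _ _ _

theorem aeval_mk_X (p : A[X]) : aeval (mk X : CyclicQuotient A n) p = mk p := by
  simpa using aeval_algHom_apply (Ideal.Quotient.mkₐ A (Ideal.span {(X : A[X]) ^ n - 1})) X p

theorem invX_mk_mul_pow_natDegree (hn : n ≠ 0) {p : A[X]} (hp : p.reverse = p) :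
    invX A n (mk p) * mk X ^ p.natDegree = mk p := by
  let _ : Invertible (mk X : CyclicQuotient A n) :=
    invertibleOfRightInverse _ _ (mk_X_mul_pow_pred hn)
  have h := eval₂_reverse_mul_pow (algebraMap A (CyclicQuotient A n)) (mk X) p
  rwa [hp, invOf_eq_right_inv (mk_X_mul_pow_pred hn), ← aeval_def, ← invX_mk, ← aeval_def,
    aeval_mk_X] at h

theorem invX_mk_eq_mul_pow (hn : n ≠ 0) {p : A[X]} (hp : p.reverse = p) :
    invX A n (mk p) = mk p * (mk X ^ (n - 1)) ^ p.natDegree := by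
  conv_rhs => rw [← invX_mk_mul_pow_natDegree hn hp]
  rw [mul_assoc, ← mul_pow, mk_X_mul_pow_pred hn, one_pow, mul_one]

theorem invX_mk_C_mul_mem_span (hn : n ≠ 0) {p : A[X]} (hp : p.reverse = p) (a : A) :
    invX A n (mk (C a * p)) ∈ Ideal.span {mk (C a * p)} := by
  refine Ideal.mem_span_singleton'.2 ⟨(mk X ^ (n - 1)) ^ p.natDegree, ?_⟩
  rw [map_mul, map_mul, invX_mk_eq_mul_pow hn hp, invX_mk, aeval_C]
  change _ = mk (C a) * _
  ring

theorem mk_X_pow_pred_mul_pow_rev (hn : n ≠ 0) (j : Fin n) :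
    (mk X : CyclicQuotient A n) ^ (n - 1) * (mk X ^ (n - 1)) ^ (j.rev : ℕ) = mk X ^ (j : ℕ) := by
  have h : n - 1 = j + (n - (j + 1)) := by omega
  calc (mk X : CyclicQuotient A n) ^ (n - 1) * (mk X ^ (n - 1)) ^ (n - (j + 1))
      = mk X ^ (j : ℕ) * (mk X * mk X ^ (n - 1)) ^ (n - (j + 1)) := by
        rw [mul_pow, ← mul_assoc, ← pow_add, ← h]
    _ = mk X ^ (j : ℕ) := by rw [mk_X_mul_pow_pred hn, one_pow, mul_one]

theorem mk_sum_rev (hn : n ≠ 0) (c : Fin n → A) :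
    mk (∑ j : Fin n, C (c j.rev) * X ^ (j : ℕ)) =
      mk X ^ (n - 1) * invX A n (mk (∑ j : Fin n, C (c j) * X ^ (j : ℕ))) := by
  rw [invX_mk, map_sum, map_sum, Finset.mul_sum]
  refine Fintype.sum_equiv Fin.revPerm _ _ fun j => ?_
  rw [Fin.revPerm_apply, map_mul, map_mul, map_pow, map_pow, aeval_C, aeval_X, mul_left_comm,
    mk_X_pow_pred_mul_pow_rev hn]
  rfl

end CyclicQuotient

theorem Ideal.map_mem_span_of_forall_map_mem_span_singleton {S F : Type*} [Semiring S]
    [FunLike F S S] [RingHomClass F S S] (f : F) {T : Set S}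
    (hT : ∀ s ∈ T, f s ∈ Ideal.span {s}) {x : S} (hx : x ∈ Ideal.span T) :
    f x ∈ Ideal.span T :=
  (Ideal.span_le (I := (Ideal.span T).comap f)).2
    (fun s hs => Ideal.span_mono (Set.singleton_subset_iff.2 hs) (hT s hs)) hx

instance : Nontrivial R :=
  AdjoinRoot.nontrivial _ (by rw [degree_X_pow]; decide)

theorem rmap_reverse (f : (ZMod 2)[X]) : (rmap f).reverse = rmap f.reverse := by
  rw [reverse, rmap, natDegree_map_eq_of_injective (algebraMap (ZMod 2) R).injective,
    reflect_map, reverse, rmap]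

theorem sum_rcomp {n : ℕ} (c : Fin n → R) :
    ∑ j : Fin n, C (rcomp c j) * X ^ (j : ℕ) =
      ∑ j : Fin n, C (c j.rev) * X ^ (j : ℕ) + ∑ j : Fin n, C alpha * X ^ (j : ℕ) := by
  simp only [rcomp, map_add, add_mul, Finset.sum_add_distrib]

theorem reverseComplement_of_selfReciprocal_general (n : ℕ) (hodd : Odd n)
    (f₀ f₁ f₂ f₃ f₄ f₅ : (ZMod 2)[X])
    (halpha : (fun _ : Fin n => alpha) ∈ cyclicCode n f₀ f₁ f₂ f₃ f₄ f₅)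
    (hs₀ : f₀.reverse = f₀) (hs₁ : f₁.reverse = f₁) (hs₂ : f₂.reverse = f₂)
    (hs₃ : f₃.reverse = f₃) (hs₄ : f₄.reverse = f₄) (hs₅ : f₅.reverse = f₅) :
    ∀ c ∈ cyclicCode n f₀ f₁ f₂ f₃ f₄ f₅, rcomp c ∈ cyclicCode n f₀ f₁ f₂ f₃ f₄ f₅ := by
  intro c hc
  have hn : n ≠ 0 := hodd.pos.ne'
  simp only [cyclicCode, mkq, Set.mem_ofPred_eq] at hc halpha ⊢
  have hgen (a : R) {f : (ZMod 2)[X]} (hf : f.reverse = f) :=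
    CyclicQuotient.invX_mk_C_mul_mem_span hn (p := rmap f) (by rw [rmap_reverse, hf]) a
  have hinv := Ideal.map_mem_span_of_forall_map_mem_span_singleton (CyclicQuotient.invX R n)
    (by
      simp only [Set.mem_insert_iff, Set.mem_singleton_iff, forall_eq_or_imp, forall_eq]
      exact ⟨by simpa using hgen 1 hs₀, hgen u hs₁, hgen _ hs₂, hgen _ hs₃, hgen _ hs₄,
        hgen _ hs₅⟩) hc
  rw [sum_rcomp, map_add, CyclicQuotient.mk_sum_rev hn]
  exact add_mem (Ideal.mul_mem_left _ _ hinv) halpha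

/-- for `n` odd and monic `f₅|f₄|f₃|f₂|f₁|f₀|(xⁿ-1)` in `F₂[x]`, if the
codeword `α(1 + x + ⋯ + x^{n-1})` belongs to the cyclic code
`⟨f₀, uf₁, u²f₂, u³f₃, u⁴f₄, u⁵f₅⟩` and every `fᵢ` is self-reciprocal, then the code is
reverse-complement. -/
theorem reverseComplement_of_selfReciprocal (n : ℕ) (hodd : Odd n)
    (f₀ f₁ f₂ f₃ f₄ f₅ : (ZMod 2)[X])
    (hm₀ : f₀.Monic) (hm₁ : f₁.Monic) (hm₂ : f₂.Monic) (hm₃ : f₃.Monic)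
    (hm₄ : f₄.Monic) (hm₅ : f₅.Monic)
    (h54 : f₅ ∣ f₄) (h43 : f₄ ∣ f₃) (h32 : f₃ ∣ f₂) (h21 : f₂ ∣ f₁) (h10 : f₁ ∣ f₀)
    (h0 : f₀ ∣ X ^ n - 1)
    (halpha : (fun _ : Fin n => alpha) ∈ cyclicCode n f₀ f₁ f₂ f₃ f₄ f₅)
    (hs₀ : f₀.reverse = f₀) (hs₁ : f₁.reverse = f₁) (hs₂ : f₂.reverse = f₂)
    (hs₃ : f₃.reverse = f₃) (hs₄ : f₄.reverse = f₄) (hs₅ : f₅.reverse = f₅) :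
    ∀ c ∈ cyclicCode n f₀ f₁ f₂ f₃ f₄ f₅, rcomp c ∈ cyclicCode n f₀ f₁ f₂ f₃ f₄ f₅ :=
  reverseComplement_of_selfReciprocal_general n hodd f₀ f₁ f₂ f₃ f₄ f₅ halpha hs₀ hs₁ hs₂ hs₃ hs₄
    hs₅
end

section
/- Let n = m·2^s with m odd and s ≥ 1, let f₀, f₁, f₂, f₃, f₄, f₅ be monic polynomials in F₂[x] with f_i | f₀ for all i and f₀ | (xⁿ−1), and let C be the cyclic code of length n over R given by the ideal of R[x]/(xⁿ−1) generated by f₀, uf₁, u²f₂, u³f₃, u⁴f₄, u⁵f₅ (coefficients embedded via F₂ ↪ R). If the codeword α(1+x+⋯+x^{n−1}) belongs to C and every f_i is self-reciprocal, then C is a reverse-complement code. -/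
open Polynomial

/-!
In `A[x]/(xⁿ - 1)` the class of `x` is a unit, and `x ↦ x⁻¹` extends to a ring endomorphism `φ`.
A word `c(x)` of degree `< n` has reversal `xⁿ⁻¹ φ(c)`, and a palindromic generator `g` of
length `N + 1` satisfies `φ(g) = x⁻ᴺ g`. Hence `φ`, and with it reversal, preserves the code.
Complementing adds the word `α(1 + x + ⋯ + xⁿ⁻¹)`, which lies in the code by hypothesis.
-/

namespace Polynomial

variable {A : Type*} [CommRing A]

def IsPalindrome (N : ℕ) (g : A[X]) : Prop :=
  g.natDegree ≤ N ∧ g.reflect N = g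

theorem IsPalindrome.C_mul {N : ℕ} {g : A[X]} (hg : g.IsPalindrome N) (a : A) :
    (C a * g).IsPalindrome N :=
  ⟨(natDegree_C_mul_le a g).trans hg.1, by rw [reflect_C_mul, hg.2]⟩

theorem IsPalindrome.map {B : Type*} [CommRing B] {N : ℕ} {g : A[X]} (hg : g.IsPalindrome N)
    (i : A →+* B) : (g.map i).IsPalindrome N :=
  ⟨natDegree_map_le.trans hg.1, by rw [reflect_map, hg.2]⟩

theorem natDegree_sum_fin_C_mul_X_pow_le {n : ℕ} (c : Fin n → A) :
    (∑ i : Fin n, C (c i) * X ^ (i : ℕ)).natDegree ≤ n - 1 :=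
  natDegree_sum_le_of_forall_le _ _ fun i _ =>
    (natDegree_C_mul_X_pow_le _ _).trans (Nat.le_sub_one_of_lt i.2)

theorem reflect_sum_fin_C_mul_X_pow {n : ℕ} (c : Fin n → A) :
    (∑ i : Fin n, C (c i) * X ^ (i : ℕ)).reflect (n - 1) =
      ∑ i : Fin n, C (c i.rev) * X ^ (i : ℕ) := by
  rw [← AddMonoidHom.mk'_apply (reflect (n - 1)) (reflect_add · · _), map_sum,
    ← Equiv.sum_comp Fin.revPerm]
  refine Finset.sum_congr rfl fun i _ => ?_
  rw [AddMonoidHom.mk'_apply, Fin.revPerm_apply, reflect_C_mul_X_pow,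
    revAt_le (Nat.le_sub_one_of_lt i.rev.2), Fin.val_rev]
  congr 2
  omega

end Polynomial

namespace AdjoinRoot

variable {A : Type*} [CommRing A] {n : ℕ}

theorem root_X_pow_sub_one_pow : root ((X : A[X]) ^ n - 1) ^ n = 1 := by
  rw [← mk_X, ← map_pow, ← sub_eq_zero, ← map_one (mk _), ← map_sub, mk_self]

variable (n) in
/-- `x ↦ x⁻¹` on `A[x]/(xⁿ - 1)`, via `x⁻¹ = xⁿ⁻¹` (junk `x ↦ 1` when `n = 0`). -/
noncomputable def reciprocal :
    AdjoinRoot ((X : A[X]) ^ n - 1) →+* AdjoinRoot ((X : A[X]) ^ n - 1) :=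
  lift (of _) (root _ ^ (n - 1)) (by
    rw [eval₂_sub, eval₂_X_pow, eval₂_one, ← pow_mul, mul_comm, pow_mul, root_X_pow_sub_one_pow,
      one_pow, sub_self])

theorem root_pow_mul_reciprocal_mk (hn : n ≠ 0) {N : ℕ} {g : A[X]} (hg : g.natDegree ≤ N) :
    root _ ^ N * reciprocal n (mk _ g) = mk _ (g.reflect N) := by
  have hinv : root ((X : A[X]) ^ n - 1) ^ (n - 1 + 1) = 1 := by
    rw [Nat.sub_add_cancel (Nat.one_le_iff_ne_zero.2 hn), root_X_pow_sub_one_pow]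
  let : Invertible (root ((X : A[X]) ^ n - 1)) :=
    ⟨root _ ^ (n - 1), by rwa [← pow_succ], by rwa [← pow_succ']⟩
  have hdeg : (g.reflect N).natDegree ≤ N := natDegree_reflect_le.trans (max_le le_rfl hg)
  rw [← aeval_eq (reflect N g), aeval_def, ← eval₂_reflect_mul_pow _ _ N _ hdeg, reflect_reflect,
    mul_comm]
  rfl

theorem reciprocal_mk_of_isPalindrome (hn : n ≠ 0) {N : ℕ} {g : A[X]} (hg : g.IsPalindrome N) :
    reciprocal n (mk _ g) = root _ ^ ((n - 1) * N) * mk _ g := by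
  calc reciprocal n (mk _ g)
      = (root _ ^ (n - 1 + 1)) ^ N * reciprocal n (mk _ g) := by
        rw [Nat.sub_add_cancel (Nat.one_le_iff_ne_zero.2 hn), root_X_pow_sub_one_pow, one_pow,
          one_mul]
    _ = root _ ^ ((n - 1) * N) * (root _ ^ N * reciprocal n (mk _ g)) := by ring
    _ = root _ ^ ((n - 1) * N) * mk _ g := by rw [root_pow_mul_reciprocal_mk hn hg.1, hg.2]

theorem map_reciprocal_span_le (hn : n ≠ 0) {T : Set A[X]}
    (hT : ∀ g ∈ T, ∃ N, g.IsPalindrome N) :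
    (Ideal.span (mk _ '' T)).map (reciprocal n) ≤ Ideal.span (mk _ '' T) := by
  rw [Ideal.map_span, Ideal.span_le]
  rintro _ ⟨_, ⟨g, hgT, rfl⟩, rfl⟩
  obtain ⟨N, hg⟩ := hT g hgT
  rw [reciprocal_mk_of_isPalindrome hn hg]
  exact Ideal.mul_mem_left _ _ (Ideal.subset_span ⟨g, hgT, rfl⟩)

end AdjoinRoot

theorem reverseComplement_of_selfReciprocal_even_general (n : ℕ)
    (f₀ f₁ f₂ f₃ f₄ f₅ : (ZMod 2)[X])
    (halpha : (fun _ : Fin n => alpha) ∈ cyclicCode n f₀ f₁ f₂ f₃ f₄ f₅)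
    (hs₀ : f₀.reverse = f₀) (hs₁ : f₁.reverse = f₁) (hs₂ : f₂.reverse = f₂)
    (hs₃ : f₃.reverse = f₃) (hs₄ : f₄.reverse = f₄) (hs₅ : f₅.reverse = f₅) :
    ∀ c ∈ cyclicCode n f₀ f₁ f₂ f₃ f₄ f₅, rcomp c ∈ cyclicCode n f₀ f₁ f₂ f₃ f₄ f₅ := by
  intro c hc
  rcases eq_or_ne n 0 with rfl | hn
  · rwa [Subsingleton.elim (rcomp c) c]
  have hpal (f : (ZMod 2)[X]) (hf : f.reverse = f) : (rmap f).IsPalindrome f.natDegree :=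
    IsPalindrome.map ⟨le_rfl, hf⟩ _
  have hstable := AdjoinRoot.map_reciprocal_span_le hn (T := {rmap f₀, C u * rmap f₁,
    C (u ^ 2) * rmap f₂, C (u ^ 3) * rmap f₃, C (u ^ 4) * rmap f₄, C (u ^ 5) * rmap f₅}) (by
    rintro g (rfl | rfl | rfl | rfl | rfl | rfl)
    exacts [⟨_, hpal _ hs₀⟩, ⟨_, (hpal _ hs₁).C_mul _⟩, ⟨_, (hpal _ hs₂).C_mul _⟩,
      ⟨_, (hpal _ hs₃).C_mul _⟩, ⟨_, (hpal _ hs₄).C_mul _⟩, ⟨_, (hpal _ hs₅).C_mul _⟩])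
  simp only [Set.image_insert_eq, Set.image_singleton] at hstable
  have hsplit : ∑ j : Fin n, C (rcomp c j) * X ^ (j : ℕ)
      = (∑ j : Fin n, C (c j.rev) * X ^ (j : ℕ)) + ∑ j : Fin n, C alpha * X ^ (j : ℕ) := by
    simp only [rcomp, map_add, add_mul, Finset.sum_add_distrib]
  change AdjoinRoot.mk _ (∑ j : Fin n, C (rcomp c j) * X ^ (j : ℕ)) ∈
    (Ideal.span _ : Ideal (AdjoinRoot ((X : R[X]) ^ n - 1)))
  rw [hsplit, map_add, ← reflect_sum_fin_C_mul_X_pow,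
    ← AdjoinRoot.root_pow_mul_reciprocal_mk hn (natDegree_sum_fin_C_mul_X_pow_le c)]
  exact Ideal.add_mem _ (Ideal.mul_mem_left _ _ (hstable (Ideal.mem_map_of_mem _ hc))) halpha

/-- for `n = m·2ˢ` with `m` odd and `s ≥ 1`, and monic `fᵢ | f₀ | (xⁿ-1)` in
`F₂[x]`, if the codeword `α(1 + x + ⋯ + x^{n-1})` belongs to the cyclic code
`⟨f₀, uf₁, u²f₂, u³f₃, u⁴f₄, u⁵f₅⟩` and every `fᵢ` is self-reciprocal, then the code is
reverse-complement. -/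
theorem reverseComplement_of_selfReciprocal_even (n m s : ℕ) (hm : Odd m) (hs : 1 ≤ s)
    (hn : n = m * 2 ^ s)
    (f₀ f₁ f₂ f₃ f₄ f₅ : (ZMod 2)[X])
    (hm₀ : f₀.Monic) (hm₁ : f₁.Monic) (hm₂ : f₂.Monic) (hm₃ : f₃.Monic)
    (hm₄ : f₄.Monic) (hm₅ : f₅.Monic)
    (h1 : f₁ ∣ f₀) (h2 : f₂ ∣ f₀) (h3 : f₃ ∣ f₀) (h4 : f₄ ∣ f₀) (h5 : f₅ ∣ f₀)
    (h0 : f₀ ∣ X ^ n - 1)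
    (halpha : (fun _ : Fin n => alpha) ∈ cyclicCode n f₀ f₁ f₂ f₃ f₄ f₅)
    (hs₀ : f₀.reverse = f₀) (hs₁ : f₁.reverse = f₁) (hs₂ : f₂.reverse = f₂)
    (hs₃ : f₃.reverse = f₃) (hs₄ : f₄.reverse = f₄) (hs₅ : f₅.reverse = f₅) :
    ∀ c ∈ cyclicCode n f₀ f₁ f₂ f₃ f₄ f₅, rcomp c ∈ cyclicCode n f₀ f₁ f₂ f₃ f₄ f₅ :=
  reverseComplement_of_selfReciprocal_even_general n f₀ f₁ f₂ f₃ f₄ f₅ halpha hs₀ hs₁ hs₂ hs₃ hs₄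
    hs₅
end

section
/- Let m be an odd positive integer and s ≥ 0, and suppose there exists a nonnegative integer i such that 2ⁱ ≡ −1 (mod m). Then every monic divisor g of X^{m·2^s} − 1 in F₂[X] is self-reciprocal. -/
/-!
Over `𝔽₂` we have `X ^ (m * 2 ^ s) - 1 = (X ^ m - 1) ^ 2 ^ s`, so every irreducible factor `q`
of `g` divides `X ^ m - 1`. A root `x` of `q` then has order dividing `m ∣ 2 ^ i + 1`, so
`x⁻¹ = x ^ 2 ^ i` is again a root of `q`: thus `q` divides its reverse and is self-reciprocal up
to a unit. Reversal is multiplicative on a domain, and the only unit of `𝔽₂[X]` is `1`.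
-/

open Polynomial

namespace Polynomial

theorem associated_reverse_of_forall_irreducible_dvd {R : Type*} [CommRing R] [IsDomain R]
    [WfDvdMonoid R[X]] {g : R[X]}
    (h : ∀ p : R[X], Irreducible p → p ∣ g → Associated p.reverse p) :
    Associated g.reverse g := by
  induction g using WfDvdMonoid.induction_on_irreducible with
  | zero => simp
  | unit u hu =>
    obtain ⟨r, -, rfl⟩ := isUnit_iff.mp hu
    rw [reverse_C]
  | mul a p _ hp ih =>
    rw [reverse_mul_of_domain]
    exact (h p hp (dvd_mul_right p a)).mul_mul
      (ih fun q hq hqa => h q hq (hqa.trans (dvd_mul_left a p)))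

theorem eq_of_associated_of_subsingleton_units {R : Type*} [CommRing R] [IsDomain R]
    [Subsingleton Rˣ] {p q : R[X]} (h : Associated p q) : p = q := by
  obtain ⟨u, rfl⟩ := h
  obtain ⟨r, hr, hu⟩ := isUnit_iff.mp u.isUnit
  rw [← hu, isUnit_iff_eq_one.mp hr, map_one, mul_one]

theorem aeval_pow_card_pow {K L : Type*} [Field K] [Fintype K] [CommRing L] [Algebra K L]
    (p : K[X]) (x : L) (n : ℕ) :
    aeval (x ^ Fintype.card K ^ n) p = aeval x p ^ Fintype.card K ^ n := by
  induction n with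
  | zero => simp
  | succ n ih =>
    rw [pow_succ, pow_mul, pow_mul, ← ih]
    exact aeval_algHom_apply (FiniteField.frobeniusAlgHom K L) _ p

theorem associated_reverse_of_irreducible_of_dvd_X_pow_sub_one {K : Type*} [Field K] [Fintype K]
    {q : K[X]} (hq : Irreducible q) {m i : ℕ} (hqm : q ∣ X ^ m - 1)
    (hm : m ∣ Fintype.card K ^ i + 1) : Associated q.reverse q := by
  have := Fact.mk hq
  set x := AdjoinRoot.root q
  have hx : aeval x q = 0 := by rw [AdjoinRoot.aeval_eq, AdjoinRoot.mk_self]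
  have hxm : x ^ m = 1 := by
    have := AdjoinRoot.mk_eq_zero.mpr hqm
    rwa [← AdjoinRoot.aeval_eq, map_sub, map_pow, aeval_X, map_one, sub_eq_zero] at this
  -- `x ^ #K ^ i` is a root of `q` by Frobenius, and it is `x⁻¹` because `m ∣ #K ^ i + 1`.
  have hxy : x * x ^ Fintype.card K ^ i = 1 := by
    obtain ⟨k, hk⟩ := hm
    rw [← pow_succ', hk, pow_mul, hxm, one_pow]
  let : Invertible (x ^ Fintype.card K ^ i) := ⟨x, hxy, by rw [mul_comm, hxy]⟩
  have hrev : aeval x q.reverse = 0 := by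
    change eval₂ (algebraMap K _) (⅟(x ^ Fintype.card K ^ i)) q.reverse = 0
    rw [eval₂_reverse_eq_zero_iff, ← aeval_def, aeval_pow_card_pow, hx, zero_pow (by positivity)]
  have hdvd : q ∣ q.reverse := AdjoinRoot.mk_eq_zero.mp (by rwa [← AdjoinRoot.aeval_eq])
  exact (associated_of_dvd_of_natDegree_le hdvd (mt reverse_eq_zero.mp hq.ne_zero)
    (reverse_natDegree_le q)).symm

end Polynomial

theorem selfReciprocal_of_dvd_X_pow_sub_one_general (m s : ℕ)
    (hpow : ∃ i : ℕ, (2 : ℤ) ^ i ≡ -1 [ZMOD (m : ℤ)])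
    (g : (ZMod 2)[X]) (hdvd : g ∣ X ^ (m * 2 ^ s) - 1) :
    g.reverse = g := by
  obtain ⟨i, hi⟩ := hpow
  have hmi : m ∣ Fintype.card (ZMod 2) ^ i + 1 := by
    rw [ZMod.card, ← Int.natCast_dvd_natCast]
    simpa using hi.symm.dvd
  have hfrob : (X ^ (m * 2 ^ s) - 1 : (ZMod 2)[X]) = (X ^ m - 1) ^ 2 ^ s := by
    rw [sub_pow_char_pow, ← pow_mul, one_pow]
  refine eq_of_associated_of_subsingleton_units
    (associated_reverse_of_forall_irreducible_dvd fun p hp hpg => ?_)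
  refine associated_reverse_of_irreducible_of_dvd_X_pow_sub_one hp ?_ hmi
  exact hp.prime.dvd_of_dvd_pow (hfrob ▸ hpg.trans hdvd)

/-- if `m` is odd, `s ≥ 0`, and `2ⁱ ≡ -1 (mod m)` for some `i`, then every
monic divisor of `X^(m·2ˢ) - 1` in `F₂[X]` is self-reciprocal. -/
theorem selfReciprocal_of_dvd_X_pow_sub_one (m s : ℕ) (hm : Odd m) (hm0 : 0 < m)
    (hpow : ∃ i : ℕ, (2 : ℤ) ^ i ≡ -1 [ZMOD (m : ℤ)])
    (g : (ZMod 2)[X]) (hg : g.Monic) (hdvd : g ∣ X ^ (m * 2 ^ s) - 1) :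
    g.reverse = g :=
  selfReciprocal_of_dvd_X_pow_sub_one_general m s hpow g hdvd
end
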